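/- Let E be a vector lattice with the principal projection property, F a Dedekind complete vector lattice, Φ : 𝔅(E) → 𝔅(F) a Boolean homomorphism, and T : E → F a positive orthogonally additive operator. For each finite partition of identity (π₁,…,πₙ) ∈ 𝔇₀ consider the operator x ↦ Σᵢ Φ(πᵢ)(T(πᵢ x)). Then: (i) the family of these operators is downward directed (a common refinement of two partitions gives a pointwise smaller operator); (ii) for every x ∈ E the infimum R(T)(x) := inf { Σᵢ Φ(πᵢ)(T(πᵢ x)) : (πᵢ) ∈ 𝔇₀ } exists in F; (iii) the map R(T) : E → F is orthogonally additive and satisfies 0 ≤ R(T)(x) ≤ T x for all x ∈ E. -/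

import Mathlib

/-!
Order projections commute, because `π (ρ x) = π x ⊓ ρ x` for `x ≥ 0`, so two partitions of the
identity have the common refinement `(πᵢ ∘ ρⱼ)`. Since `Φ` is multiplicative, the atomic sum over
it is `Σᵢ Φ(πᵢ) (Σⱼ Φ(ρⱼ) T(ρⱼ πᵢ x))`, and an atomic sum never exceeds `T` (the `Φ(ρⱼ)` shrink
positive vectors and `T` is additive over a partition); this gives (i). The atomic sums are
positive and include `T x` itself, whence (ii) and the bounds in (iii). Order projections are
contractions for `|·|`, so they keep `x ⊥ y` disjoint: every atomic sum of `x + y` is the sum of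
the atomic sums of `x` and `y` for the same partition, and by (i) the infima add up.
-/

namespace VL

/-- Two elements of a vector lattice are disjoint if `|x| ⊓ |y| = 0`. -/
def VDisjoint {G : Type*} [Lattice G] [AddCommGroup G] (x y : G) : Prop :=
  |x| ⊓ |y| = 0

/-- `y` is a fragment of `x` if `y ⊥ (x - y)`. -/
def Fragment {G : Type*} [Lattice G] [AddCommGroup G] (y x : G) : Prop :=
  VDisjoint y (x - y)

/-- An order projection: a linear idempotent `π` with `0 ≤ π x ≤ x` for all `x ≥ 0`. -/
def IsOrderProjection {G : Type*} [Lattice G] [AddCommGroup G] [Module ℝ G]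
    (π : G →ₗ[ℝ] G) : Prop :=
  (∀ x, π (π x) = π x) ∧ ∀ x : G, 0 ≤ x → 0 ≤ π x ∧ π x ≤ x

/-- A map between the order projections of `E` and of `F` is a Boolean homomorphism if it
maps order projections to order projections and preserves the Boolean operations
`π ∧ ρ = π ∘ ρ`, `π ∨ ρ = π + ρ - π ∘ ρ` and `compl π = Id - π`. -/
def IsBooleanHom {E F : Type*} [Lattice E] [AddCommGroup E] [Module ℝ E]
    [Lattice F] [AddCommGroup F] [Module ℝ F]
    (Φ : (E →ₗ[ℝ] E) → (F →ₗ[ℝ] F)) : Prop :=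
  (∀ π, IsOrderProjection π → IsOrderProjection (Φ π)) ∧
  (∀ π ρ, IsOrderProjection π → IsOrderProjection ρ →
    Φ (π ∘ₗ ρ) = Φ π ∘ₗ Φ ρ) ∧
  (∀ π ρ, IsOrderProjection π → IsOrderProjection ρ →
    Φ (π + ρ - π ∘ₗ ρ) = Φ π + Φ ρ - Φ π ∘ₗ Φ ρ) ∧
  (∀ π, IsOrderProjection π → Φ (LinearMap.id - π) = LinearMap.id - Φ π)

/-- `T` is atomic subordinate to `Φ` if `T (π x) = Φ(π) (T x)` for every order projection. -/
def IsAtomic {E F : Type*} [Lattice E] [AddCommGroup E] [Module ℝ E]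
    [Lattice F] [AddCommGroup F] [Module ℝ F]
    (Φ : (E →ₗ[ℝ] E) → (F →ₗ[ℝ] F)) (T : E → F) : Prop :=
  ∀ π : E →ₗ[ℝ] E, IsOrderProjection π → ∀ x : E, T (π x) = Φ π (T x)

/-- The principal projection property: for every `x` there is an order projection `π_x`
(the projection onto the band generated by `x`) such that `z - π_x z ⊥ x` for all `z`,
and `π_x z ⊥ w` whenever `w ⊥ x`. -/
def HasPPP (E : Type*) [Lattice E] [AddCommGroup E] [Module ℝ E] : Prop :=
  ∀ x : E, ∃ π : E →ₗ[ℝ] E, IsOrderProjection π ∧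
    (∀ z : E, VDisjoint (z - π z) x) ∧
    (∀ z w : E, VDisjoint w x → VDisjoint (π z) w)

/-- Dedekind completeness: every nonempty set bounded above has a supremum. -/
def DedekindComplete (F : Type*) [Lattice F] : Prop :=
  ∀ S : Set F, S.Nonempty → BddAbove S → ∃ b, IsLUB S b


variable {E F : Type*}
  [Lattice E] [AddCommGroup E] [Module ℝ E]
  [CovariantClass E E (· + ·) (· ≤ ·)] [PosSMulMono ℝ E]
  [Lattice F] [AddCommGroup F] [Module ℝ F]
  [CovariantClass F F (· + ·) (· ≤ ·)] [PosSMulMono ℝ F]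

/-- A finite partition of the identity: finitely many pairwise disjoint order projections
summing to the identity. -/
def IsPartitionOfIdentity {E : Type*} [Lattice E] [AddCommGroup E] [Module ℝ E]
    {n : ℕ} (π : Fin n → E →ₗ[ℝ] E) : Prop :=
  (∀ i, IsOrderProjection (π i)) ∧
  (∀ i j, i ≠ j → (π i) ∘ₗ (π j) = 0) ∧
  (∑ i, π i) = LinearMap.id

/-- The set `{ Σᵢ Φ(πᵢ)(T(πᵢ x)) : (πᵢ) ∈ 𝔇₀ }` of values at `x` of the operators
associated to finite partitions of the identity. -/
def atomicSumSet (Φ : (E →ₗ[ℝ] E) → (F →ₗ[ℝ] F)) (T : E → F) (x : E) : Set F :=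
  {w : F | ∃ (n : ℕ) (π : Fin n → E →ₗ[ℝ] E), IsPartitionOfIdentity π ∧
    w = ∑ i, Φ (π i) (T (π i x))}

def OrthogonallyAdditive {V W : Type*} [Lattice V] [AddCommGroup V] [Add W] (T : V → W) :
    Prop :=
  ∀ x y : V, VDisjoint x y → T (x + y) = T x + T y

def atomicSum {V W : Type*} [AddCommGroup V] [Module ℝ V] [AddCommGroup W] [Module ℝ W]
    (Φ : (V →ₗ[ℝ] V) → (W →ₗ[ℝ] W)) (T : V → W) {n : ℕ} (π : Fin n → V →ₗ[ℝ] V) (x : V) :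
    W :=
  ∑ i, Φ (π i) (T (π i x))

section LatticeGroup

variable {V : Type*} [Lattice V] [AddCommGroup V] [AddLeftMono V]

lemma inf_add_le_add_inf {a b c : V} (ha : 0 ≤ a) (hb : 0 ≤ b) (hc : 0 ≤ c) :
    a ⊓ (b + c) ≤ a ⊓ b + a ⊓ c := by
  have h : a ⊓ (b + c) ≤ a := inf_le_left
  rw [inf_add, add_inf, add_inf]
  exact le_inf (le_inf (h.trans (le_add_of_nonneg_left ha)) (h.trans (le_add_of_nonneg_right hc)))
    (le_inf (h.trans (le_add_of_nonneg_left hb)) inf_le_right)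

lemma VDisjoint.mono {x y x' y' : V} (h : VDisjoint x y) (hx : |x'| ≤ |x|) (hy : |y'| ≤ |y|) :
    VDisjoint x' y' :=
  le_antisymm (h ▸ inf_le_inf hx hy) (le_inf (abs_nonneg _) (abs_nonneg _))

lemma VDisjoint.add_right {x y z : V} (hy : VDisjoint x y) (hz : VDisjoint x z) :
    VDisjoint x (y + z) := by
  refine le_antisymm ?_ (le_inf (abs_nonneg _) (abs_nonneg _))
  calc |x| ⊓ |y + z| ≤ |x| ⊓ (|y| + |z|) := inf_le_inf_left _ (abs_add_le y z)
    _ ≤ |x| ⊓ |y| + |x| ⊓ |z| := inf_add_le_add_inf (abs_nonneg _) (abs_nonneg _) (abs_nonneg _)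
    _ = 0 := by rw [show |x| ⊓ |y| = 0 from hy, show |x| ⊓ |z| = 0 from hz, add_zero]

lemma VDisjoint.sum_right {ι : Type*} {x : V} {f : ι → V} {s : Finset ι}
    (h : ∀ i ∈ s, VDisjoint x (f i)) : VDisjoint x (∑ i ∈ s, f i) := by
  classical
  induction s using Finset.induction_on with
  | empty => simp [VDisjoint]
  | insert j s hj ih =>
    rw [Finset.sum_insert hj]
    exact (h j (s.mem_insert_self j)).add_right (ih fun i hi => h i (Finset.mem_insert_of_mem hi))

end LatticeGroup

namespace OrthogonallyAdditive

variable {V W : Type*} [Lattice V] [AddCommGroup V] [AddLeftMono V] [AddCommGroup W]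
  {T : V → W}

lemma map_zero (hT : OrthogonallyAdditive T) : T 0 = 0 := by
  simpa using hT 0 0 (by simp [VDisjoint])

lemma map_sum (hT : OrthogonallyAdditive T) {ι : Type*} {f : ι → V} (s : Finset ι)
    (hf : (s : Set ι).Pairwise fun i j => VDisjoint (f i) (f j)) :
    T (∑ i ∈ s, f i) = ∑ i ∈ s, T (f i) := by
  classical
  induction s using Finset.induction_on with
  | empty => simpa using hT.map_zero
  | insert j s hj ih =>
    have hdisj : VDisjoint (f j) (∑ i ∈ s, f i) := VDisjoint.sum_right fun i hi =>
      hf (s.mem_insert_self j) (Finset.mem_insert_of_mem hi) (ne_of_mem_of_not_mem hi hj).symm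
    rw [Finset.sum_insert hj, Finset.sum_insert hj, hT _ _ hdisj,
      ih (hf.mono (by simp [Finset.coe_insert]))]

end OrthogonallyAdditive

lemma DedekindComplete.exists_isGLB {W : Type*} [Lattice W] [AddCommGroup W] [AddLeftMono W]
    (hF : DedekindComplete W) {S : Set W} (hne : S.Nonempty) (hbdd : BddBelow S) :
    ∃ b, IsGLB S b := by
  obtain ⟨b, hb⟩ := hF (-S) hne.neg hbdd.neg
  exact ⟨-b, isLUB_neg.1 hb⟩

lemma isOrderProjection_id {V : Type*} [Lattice V] [AddCommGroup V] [Module ℝ V] :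
    IsOrderProjection (LinearMap.id : V →ₗ[ℝ] V) :=
  ⟨fun _ => rfl, fun _ hx => ⟨hx, le_rfl⟩⟩

lemma isOrderProjection_zero {V : Type*} [Lattice V] [AddCommGroup V] [Module ℝ V] :
    IsOrderProjection (0 : V →ₗ[ℝ] V) :=
  ⟨fun _ => rfl, fun _ hx => ⟨le_rfl, hx⟩⟩

namespace IsOrderProjection

variable {V : Type*} [Lattice V] [AddCommGroup V] [Module ℝ V] [AddLeftMono V]
  {π ρ : V →ₗ[ℝ] V}

lemma monotone (hπ : IsOrderProjection π) : Monotone π := fun a b hab => by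
  simpa [sub_nonneg] using (hπ.2 _ (sub_nonneg.2 hab)).1

lemma id_sub (hπ : IsOrderProjection π) : IsOrderProjection (LinearMap.id - π) := by
  refine ⟨fun x => by simp [hπ.1], fun x hx => ?_⟩
  simpa [sub_nonneg] using (hπ.2 x hx).symm

lemma abs_apply_le_apply_abs (hπ : IsOrderProjection π) (x : V) : |π x| ≤ π |x| :=
  sup_le (hπ.monotone (le_abs_self x)) (by simpa using hπ.monotone (neg_le_abs x))

lemma abs_apply_le (hπ : IsOrderProjection π) (x : V) : |π x| ≤ |x| :=
  (hπ.abs_apply_le_apply_abs x).trans (hπ.2 _ (abs_nonneg x)).2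

lemma vDisjoint_apply (hπ : IsOrderProjection π) {x y : V} (h : VDisjoint x y) :
    VDisjoint (π x) (π y) :=
  h.mono (hπ.abs_apply_le x) (hπ.abs_apply_le y)

/-- `u := π x ⊓ (y - π y)` is killed by `π` (as `u ≤ y - π y`) and by `id - π` (as `u ≤ π x`). -/
lemma inf_sub_apply_eq_zero (hπ : IsOrderProjection π) {x y : V} (hx : 0 ≤ x) (hy : 0 ≤ y) :
    π x ⊓ (y - π y) = 0 := by
  set u := π x ⊓ (y - π y)
  have hu : 0 ≤ u := le_inf (hπ.2 x hx).1 (sub_nonneg.2 (hπ.2 y hy).2)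
  have hπu : π u ≤ 0 := by
    simpa [hπ.1] using hπ.monotone (inf_le_right : u ≤ y - π y)
  have hπ'u : u - π u ≤ 0 := by
    simpa [hπ.1] using hπ.id_sub.monotone (inf_le_left : u ≤ π x)
  exact le_antisymm (by simpa using add_nonpos hπ'u hπu) hu

lemma apply_apply_eq_inf (hπ : IsOrderProjection π) (hρ : IsOrderProjection ρ) {x : V}
    (hx : 0 ≤ x) : π (ρ x) = π x ⊓ ρ x := by
  have hρx := hρ.2 x hx
  refine le_antisymm (le_inf (hπ.monotone hρx.2) (hπ.2 _ hρx.1).2) (sub_nonpos.1 ?_)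
  calc π x ⊓ ρ x - π (ρ x) ≤ π x ⊓ (ρ x - π (ρ x)) :=
        le_inf (sub_le_iff_le_add.2 (inf_le_left.trans (le_add_of_nonneg_right (hπ.2 _ hρx.1).1)))
          (sub_le_sub_right inf_le_right _)
    _ = 0 := hπ.inf_sub_apply_eq_zero hx hρx.1

lemma comm (hπ : IsOrderProjection π) (hρ : IsOrderProjection ρ) : π ∘ₗ ρ = ρ ∘ₗ π := by
  ext x
  rw [← posPart_sub_negPart x]
  simp only [LinearMap.comp_apply, map_sub]
  rw [hπ.apply_apply_eq_inf hρ (posPart_nonneg x), hρ.apply_apply_eq_inf hπ (posPart_nonneg x),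
    hπ.apply_apply_eq_inf hρ (negPart_nonneg x), hρ.apply_apply_eq_inf hπ (negPart_nonneg x),
    inf_comm (π x⁺), inf_comm (π x⁻)]

lemma comp (hπ : IsOrderProjection π) (hρ : IsOrderProjection ρ) :
    IsOrderProjection (π ∘ₗ ρ) := by
  refine ⟨fun x => ?_, fun x hx => ?_⟩
  · change π (ρ (π (ρ x))) = π (ρ x)
    rw [← LinearMap.comp_apply ρ π, ← hπ.comm hρ, LinearMap.comp_apply, hπ.1, hρ.1]
  · have hρx := hρ.2 x hx
    exact ⟨(hπ.2 _ hρx.1).1, (hπ.2 _ hρx.1).2.trans hρx.2⟩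

lemma vDisjoint_apply_of_comp_eq_zero (hπ : IsOrderProjection π) (hρ : IsOrderProjection ρ)
    (h : π ∘ₗ ρ = 0) (x : V) : VDisjoint (π x) (ρ x) := by
  refine le_antisymm ?_ (le_inf (abs_nonneg _) (abs_nonneg _))
  calc |π x| ⊓ |ρ x| ≤ π |x| ⊓ ρ |x| :=
        inf_le_inf (hπ.abs_apply_le_apply_abs x) (hρ.abs_apply_le_apply_abs x)
    _ = 0 := by
      rw [← hπ.apply_apply_eq_inf hρ (abs_nonneg x), ← LinearMap.comp_apply, h,
        LinearMap.zero_apply]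

end IsOrderProjection

namespace IsBooleanHom

variable {V W : Type*} [Lattice V] [AddCommGroup V] [Module ℝ V] [AddLeftMono V]
  [Lattice W] [AddCommGroup W] [Module ℝ W] {Φ : (V →ₗ[ℝ] V) → (W →ₗ[ℝ] W)}

/-- `Φ 0 = Φ (0 ∘ (id - 0)) = Φ 0 ∘ (id - Φ 0)`, which vanishes as `Φ 0` is idempotent. -/
lemma map_zero (hΦ : IsBooleanHom Φ) : Φ 0 = 0 := by
  have h := hΦ.2.1 0 _ isOrderProjection_zero isOrderProjection_zero.id_sub
  rw [hΦ.2.2.2 0 isOrderProjection_zero, LinearMap.zero_comp] at h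
  ext x
  simpa [(hΦ.1 0 isOrderProjection_zero).1] using LinearMap.congr_fun h x

lemma map_id (hΦ : IsBooleanHom Φ) : Φ LinearMap.id = LinearMap.id := by
  simpa [hΦ.map_zero] using hΦ.2.2.2 0 isOrderProjection_zero

end IsBooleanHom

def partitionProd {V : Type*} [AddCommGroup V] [Module ℝ V] {n m : ℕ}
    (π : Fin n → V →ₗ[ℝ] V) (ρ : Fin m → V →ₗ[ℝ] V) : Fin (n * m) → V →ₗ[ℝ] V :=
  fun t => π (finProdFinEquiv.symm t).1 ∘ₗ ρ (finProdFinEquiv.symm t).2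

lemma sum_partitionProd {V M : Type*} [AddCommGroup V] [Module ℝ V] [AddCommMonoid M] {n m : ℕ}
    (π : Fin n → V →ₗ[ℝ] V) (ρ : Fin m → V →ₗ[ℝ] V) (f : (V →ₗ[ℝ] V) → M) :
    ∑ t, f (partitionProd π ρ t) = ∑ i, ∑ j, f (π i ∘ₗ ρ j) := by
  rw [← Fintype.sum_prod_type']
  exact finProdFinEquiv.symm.sum_comp fun p => f (π p.1 ∘ₗ ρ p.2)

lemma isPartitionOfIdentity_id {V : Type*} [Lattice V] [AddCommGroup V] [Module ℝ V] :
    IsPartitionOfIdentity fun _ : Fin 1 => (LinearMap.id : V →ₗ[ℝ] V) :=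
  ⟨fun _ => isOrderProjection_id, fun i j hij => absurd (Subsingleton.elim i j) hij, by simp⟩

namespace IsPartitionOfIdentity

variable {V : Type*} [Lattice V] [AddCommGroup V] [Module ℝ V]
  {n m : ℕ} {π : Fin n → V →ₗ[ℝ] V} {ρ : Fin m → V →ₗ[ℝ] V}

lemma sum_apply (h : IsPartitionOfIdentity π) (x : V) : ∑ i, π i x = x := by
  simpa using LinearMap.congr_fun h.2.2 x

lemma apply_apply_of_ne (h : IsPartitionOfIdentity π) {i j : Fin n} (hij : i ≠ j) (x : V) :
    π i (π j x) = 0 :=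
  LinearMap.congr_fun (h.2.1 i j hij) x

variable [AddLeftMono V]

lemma map_sum_apply {W : Type*} [AddCommGroup W] {T : V → W} (hT : OrthogonallyAdditive T)
    (h : IsPartitionOfIdentity π) (x : V) : ∑ i, T (π i x) = T x := by
  rw [← hT.map_sum, h.sum_apply]
  exact fun i _ j _ hij =>
    (h.1 i).vDisjoint_apply_of_comp_eq_zero (h.1 j) (h.2.1 i j hij) x

lemma partitionProd (hπ : IsPartitionOfIdentity π) (hρ : IsPartitionOfIdentity ρ) :
    IsPartitionOfIdentity (partitionProd π ρ) := by
  refine ⟨fun t => (hπ.1 _).comp (hρ.1 _), fun t s hts => ?_, ?_⟩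
  · obtain ⟨⟨i, j⟩, rfl⟩ := finProdFinEquiv.surjective t
    obtain ⟨⟨k, l⟩, rfl⟩ := finProdFinEquiv.surjective s
    ext x
    simp only [VL.partitionProd, Equiv.symm_apply_apply, LinearMap.comp_apply,
      LinearMap.zero_apply]
    rw [← LinearMap.comp_apply (ρ j) (π k), ← (hπ.1 k).comm (hρ.1 j), LinearMap.comp_apply]
    by_cases hik : i = k
    · subst hik
      have hjl : j ≠ l := fun hjl => hts (by rw [hjl])
      rw [hρ.apply_apply_of_ne hjl, map_zero, map_zero]
    · rw [hπ.apply_apply_of_ne hik]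
  · ext x
    calc (∑ t, VL.partitionProd π ρ t) x = ∑ i, ∑ j, π i (ρ j x) := by
          rw [LinearMap.sum_apply]
          exact sum_partitionProd π ρ fun σ => σ x
      _ = x := by simp only [← map_sum, hρ.sum_apply, hπ.sum_apply]

end IsPartitionOfIdentity

section AtomicSum

variable {V W : Type*} [Lattice V] [AddCommGroup V] [Module ℝ V]
  [AddCommGroup W] [Module ℝ W] {Φ : (V →ₗ[ℝ] V) → (W →ₗ[ℝ] W)} {T : V → W}
  {n m : ℕ} {π : Fin n → V →ₗ[ℝ] V} {ρ : Fin m → V →ₗ[ℝ] V}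

lemma atomicSum_add_of_vDisjoint [AddLeftMono V] (hT : OrthogonallyAdditive T)
    (hπ : ∀ i, IsOrderProjection (π i)) {x y : V} (hxy : VDisjoint x y) :
    atomicSum Φ T π (x + y) = atomicSum Φ T π x + atomicSum Φ T π y := by
  simp only [atomicSum, ← Finset.sum_add_distrib, map_add, hT _ _ ((hπ _).vDisjoint_apply hxy)]

variable [Lattice W]

lemma apply_mem_atomicSumSet [AddLeftMono V] (hΦ : IsBooleanHom Φ) (x : V) :
    T x ∈ atomicSumSet Φ T x :=
  ⟨1, _, isPartitionOfIdentity_id, by simp [hΦ.map_id]⟩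

variable [AddLeftMono W]

lemma atomicSum_nonneg (hΦ : IsBooleanHom Φ) (hT : ∀ x, 0 ≤ T x)
    (hπ : ∀ i, IsOrderProjection (π i)) (x : V) : 0 ≤ atomicSum Φ T π x :=
  Finset.sum_nonneg fun i _ => ((hΦ.1 _ (hπ i)).2 _ (hT _)).1

lemma zero_mem_lowerBounds_atomicSumSet (hΦ : IsBooleanHom Φ) (hT : ∀ x, 0 ≤ T x) (x : V) :
    0 ∈ lowerBounds (atomicSumSet Φ T x) := by
  rintro _ ⟨n, π, hπ, rfl⟩
  exact atomicSum_nonneg hΦ hT hπ.1 x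

variable [AddLeftMono V]

lemma atomicSum_le_apply (hΦ : IsBooleanHom Φ) (hT : ∀ x, 0 ≤ T x)
    (hTo : OrthogonallyAdditive T) (hπ : IsPartitionOfIdentity π) (x : V) :
    atomicSum Φ T π x ≤ T x :=
  calc atomicSum Φ T π x ≤ ∑ i, T (π i x) :=
        Finset.sum_le_sum fun i _ => ((hΦ.1 _ (hπ.1 i)).2 _ (hT _)).2
    _ = T x := hπ.map_sum_apply hTo x

lemma sum_sum_le_atomicSum (hΦ : IsBooleanHom Φ) (hT : ∀ x, 0 ≤ T x)
    (hTo : OrthogonallyAdditive T) (hπ : IsPartitionOfIdentity π) (hρ : IsPartitionOfIdentity ρ)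
    (x : V) : ∑ i, ∑ j, Φ (π i ∘ₗ ρ j) (T ((π i ∘ₗ ρ j) x)) ≤ atomicSum Φ T π x := by
  refine Finset.sum_le_sum fun i _ => ?_
  calc ∑ j, Φ (π i ∘ₗ ρ j) (T ((π i ∘ₗ ρ j) x)) = Φ (π i) (atomicSum Φ T ρ (π i x)) := by
        rw [atomicSum, map_sum]
        refine Finset.sum_congr rfl fun j _ => ?_
        rw [hΦ.2.1 _ _ (hπ.1 i) (hρ.1 j), ← LinearMap.comp_apply (ρ j) (π i) x,
          ← (hπ.1 i).comm (hρ.1 j)]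
        rfl
    _ ≤ Φ (π i) (T (π i x)) :=
        (hΦ.1 _ (hπ.1 i)).monotone (atomicSum_le_apply hΦ hT hTo hρ _)

lemma exists_common_refinement (hΦ : IsBooleanHom Φ) (hT : ∀ x, 0 ≤ T x)
    (hTo : OrthogonallyAdditive T) (hπ : IsPartitionOfIdentity π) (hρ : IsPartitionOfIdentity ρ) :
    ∃ (k : ℕ) (σ : Fin k → V →ₗ[ℝ] V), IsPartitionOfIdentity σ ∧
      ∀ x, atomicSum Φ T σ x ≤ atomicSum Φ T π x ∧ atomicSum Φ T σ x ≤ atomicSum Φ T ρ x := by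
  refine ⟨_, partitionProd π ρ, hπ.partitionProd hρ, fun x => ⟨?_, ?_⟩⟩
  · exact (sum_partitionProd π ρ fun σ => Φ σ (T (σ x))).trans_le
      (sum_sum_le_atomicSum hΦ hT hTo hπ hρ x)
  · have hcomm : ∀ i j, π i ∘ₗ ρ j = ρ j ∘ₗ π i := fun i j => (hπ.1 i).comm (hρ.1 j)
    refine (sum_partitionProd π ρ fun σ => Φ σ (T (σ x))).trans_le ?_
    simp only [hcomm]
    rw [Finset.sum_comm]
    exact sum_sum_le_atomicSum hΦ hT hTo hρ hπ x

lemma exists_isGLB_atomicSumSet (hF : DedekindComplete W) (hΦ : IsBooleanHom Φ)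
    (hT : ∀ x, 0 ≤ T x) (x : V) : ∃ b, IsGLB (atomicSumSet Φ T x) b :=
  hF.exists_isGLB ⟨_, apply_mem_atomicSumSet hΦ x⟩ ⟨0, zero_mem_lowerBounds_atomicSumSet hΦ hT x⟩

lemma isGLB_atomicSumSet_add (hΦ : IsBooleanHom Φ) (hT : ∀ x, 0 ≤ T x)
    (hTo : OrthogonallyAdditive T) {x y : V} (hxy : VDisjoint x y) {a b : W}
    (ha : IsGLB (atomicSumSet Φ T x) a) (hb : IsGLB (atomicSumSet Φ T y) b) :
    IsGLB (atomicSumSet Φ T (x + y)) (a + b) := by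
  refine (ha.add hb).of_isCoinitialFor ?_ ?_
  · rintro _ ⟨n, π, hπ, rfl⟩
    exact ⟨_, ⟨n, π, hπ, rfl⟩, _, ⟨n, π, hπ, rfl⟩,
      (atomicSum_add_of_vDisjoint hTo hπ.1 hxy).symm⟩
  · rintro _ ⟨_, ⟨n, π, hπ, rfl⟩, _, ⟨m, ρ, hρ, rfl⟩, rfl⟩
    obtain ⟨k, σ, hσ, hle⟩ := exists_common_refinement hΦ hT hTo hπ hρ
    exact ⟨_, ⟨k, σ, hσ, rfl⟩, (atomicSum_add_of_vDisjoint hTo hσ.1 hxy).trans_le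
      (add_le_add (hle x).1 (hle y).2)⟩

end AtomicSum

theorem atomic_projection_construction_general
    (hF : DedekindComplete F)
    (Φ : (E →ₗ[ℝ] E) → (F →ₗ[ℝ] F)) (hΦ : IsBooleanHom Φ)
    (T : E → F) (hTpos : ∀ x : E, 0 ≤ T x)
    (hToa : ∀ x y : E, VDisjoint x y → T (x + y) = T x + T y) :
    -- (i) downward directedness via common refinements
    (∀ (n m : ℕ) (π : Fin n → E →ₗ[ℝ] E) (ρ : Fin m → E →ₗ[ℝ] E),
      IsPartitionOfIdentity π → IsPartitionOfIdentity ρ →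
      ∃ (k : ℕ) (σ : Fin k → E →ₗ[ℝ] E), IsPartitionOfIdentity σ ∧
        ∀ x : E, (∑ i, Φ (σ i) (T (σ i x))) ≤ (∑ i, Φ (π i) (T (π i x))) ∧
          (∑ i, Φ (σ i) (T (σ i x))) ≤ (∑ i, Φ (ρ i) (T (ρ i x)))) ∧
    -- (ii) the infimum exists
    (∀ x : E, ∃ b : F, IsGLB (atomicSumSet Φ T x) b) ∧
    -- (iii) any pointwise infimum R(T) is orthogonally additive and 0 ≤ R(T) ≤ T
    (∀ R : E → F, (∀ x : E, IsGLB (atomicSumSet Φ T x) (R x)) →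
      (∀ x y : E, VDisjoint x y → R (x + y) = R x + R y) ∧
      ∀ x : E, 0 ≤ R x ∧ R x ≤ T x) := by
  refine ⟨fun _ _ _ _ hπ hρ => exists_common_refinement hΦ hTpos hToa hπ hρ,
    exists_isGLB_atomicSumSet hF hΦ hTpos, fun _ hR => ⟨fun x y hxy => ?_, fun x => ⟨?_, ?_⟩⟩⟩
  · exact (hR (x + y)).unique (isGLB_atomicSumSet_add hΦ hTpos hToa hxy (hR x) (hR y))
  · exact (hR x).2 (zero_mem_lowerBounds_atomicSumSet hΦ hTpos x)
  · exact (hR x).1 (apply_mem_atomicSumSet hΦ x)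

/-- the family of operators `x ↦ Σᵢ Φ(πᵢ)(T(πᵢ x))` over finite partitions of
the identity is downward directed, its pointwise infimum `R(T)` exists, and `R(T)` is
orthogonally additive with `0 ≤ R(T) ≤ T`. -/
theorem atomic_projection_construction
    (hE : HasPPP E) (hF : DedekindComplete F)
    (Φ : (E →ₗ[ℝ] E) → (F →ₗ[ℝ] F)) (hΦ : IsBooleanHom Φ)
    (T : E → F) (hTpos : ∀ x : E, 0 ≤ T x)
    (hToa : ∀ x y : E, VDisjoint x y → T (x + y) = T x + T y) :
    -- (i) downward directedness via common refinements
    (∀ (n m : ℕ) (π : Fin n → E →ₗ[ℝ] E) (ρ : Fin m → E →ₗ[ℝ] E),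
      IsPartitionOfIdentity π → IsPartitionOfIdentity ρ →
      ∃ (k : ℕ) (σ : Fin k → E →ₗ[ℝ] E), IsPartitionOfIdentity σ ∧
        ∀ x : E, (∑ i, Φ (σ i) (T (σ i x))) ≤ (∑ i, Φ (π i) (T (π i x))) ∧
          (∑ i, Φ (σ i) (T (σ i x))) ≤ (∑ i, Φ (ρ i) (T (ρ i x)))) ∧
    -- (ii) the infimum exists
    (∀ x : E, ∃ b : F, IsGLB (atomicSumSet Φ T x) b) ∧
    -- (iii) any pointwise infimum R(T) is orthogonally additive and 0 ≤ R(T) ≤ T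
    (∀ R : E → F, (∀ x : E, IsGLB (atomicSumSet Φ T x) (R x)) →
      (∀ x y : E, VDisjoint x y → R (x + y) = R x + R y) ∧
      ∀ x : E, 0 ≤ R x ∧ R x ≤ T x) :=
  atomic_projection_construction_general hF Φ hΦ T hTpos hToa

end VL
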